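/- arXiv:1704.07549 — 5 statements merged into one kernel-verified Lean document; each statement's English description precedes it below -/
import Mathlib

section
/- Sign-coherence together with the recurrence formula implies the basis conjecture: suppose for every seed the g-vectors g^{t_0}_{1;t}, …, g^{t_0}_{n;t} ∈ ℤⁿ form a ℤ-basis when t = t_0 (where they equal the standard basis vectors e_1,…,e_n), and suppose the g-vectors with respect to adjacent base vertices t_1, t_2 (joined by an edge labeled k) are related by the piecewise-linear map T with (Tg)_k = -g_k, (Tg)_i = g_i + [b_{ik}]_+ g_k - b_{ik} min(g_k,0), and suppose at each vertex t the family {g^{t_1}_{a;t}}_a is sign-coherent in coordinate k. Then for every vertex t of the exchange tree, the g-vectors g^{t_0}_{1;t},…,g^{t_0}_{n;t} form a ℤ-basis of ℤⁿ. -/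
/-!
The columns of `G t` are the g-vectors at `t`. Sign-coherence of the `k`-th coordinates puts the
whole family in one linearity domain of the piecewise-linear mutation map, where it acts as
`g ↦ g + [ε b]₊ g_k` off row `k` and negates row `k`, for the common sign `ε`. Adding multiples of
row `k` to other rows does not change a determinant, so each mutation changes `det G` by a sign,
and `det G t = ±1` follows along a path from `t₀`.
-/

open Matrix

theorem Matrix.det_eq_neg_of_negRow_add_smul {ι R : Type*} [Fintype ι] [DecidableEq ι]
    [CommRing R] {A B : Matrix ι ι R} (k : ι) (c : ι → R)
    (hB : ∀ i a, B i a = if i = k then -A k a else A i a + c i * A k a) :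
    B.det = -A.det := by
  have hneg : (A.updateRow k ((-1 : R) • A k)).det = -A.det := by
    rw [det_updateRow_smul, updateRow_eq_self, neg_one_mul]
  rw [← hneg]
  refine det_eq_of_forall_row_eq_smul_add_const (Function.update (-c) k 0) k (by simp) ?_
  intro i a
  rcases eq_or_ne i k with rfl | hi
  · simp [hB]
  · simp [hB, hi]

theorem exists_units_mul_nonneg_of_signCoherent {ι : Type*} {x : ι → ℤ}
    (hx : (∀ a, 0 ≤ x a) ∨ ∀ a, x a ≤ 0) : ∃ ε : ℤˣ, ∀ a, 0 ≤ ε * x a := by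
  rcases hx with h | h
  · exact ⟨1, by simpa using h⟩
  · exact ⟨-1, by simpa using h⟩

theorem max_mul_sub_mul_min_eq_of_units_mul_nonneg {ε : ℤˣ} {x : ℤ} (hx : 0 ≤ ε * x) (b : ℤ) :
    max b 0 * x - b * min x 0 = max (ε * b) 0 * x := by
  rcases Int.units_eq_one_or ε with rfl | rfl
  · simp only [Units.val_one, one_mul] at hx ⊢
    rw [min_eq_right hx]
    ring
  · simp only [Units.val_neg, Units.val_one, neg_mul, one_mul, neg_nonneg] at hx ⊢
    rw [min_eq_left hx]
    rcases le_total b 0 with hb | hb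
    · rw [max_eq_right hb, max_eq_left (neg_nonneg.mpr hb)]
      ring
    · rw [max_eq_left hb, max_eq_right (neg_nonpos.mpr hb)]
      ring

theorem det_eq_neg_of_signCoherent_mutation {n : ℕ} {G₁ G₂ : Matrix (Fin n) (Fin n) ℤ}
    {k : Fin n} (b : Fin n → ℤ) (hsc : (∀ a, 0 ≤ G₁ k a) ∨ ∀ a, G₁ k a ≤ 0)
    (hrec : ∀ a i, G₂ i a =
      if i = k then -G₁ k a else G₁ i a + max (b i) 0 * G₁ k a - b i * min (G₁ k a) 0) :
    G₂.det = -G₁.det := by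
  obtain ⟨ε, hε⟩ := exists_units_mul_nonneg_of_signCoherent hsc
  refine det_eq_neg_of_negRow_add_smul k (fun i => max (ε * b i) 0) fun i a => ?_
  rw [hrec, add_sub_assoc, max_mul_sub_mul_min_eq_of_units_mul_nonneg (hε a)]

/-- Sign-coherence together with the g-vector recurrence formula implies the basis
conjecture.  The exchange tree is modelled by a type `V` of vertices with edges
labelled by `Fin n` (relation `E`), every vertex being reachable from the base
vertex `t₀`.  To each vertex `t` is attached a matrix `G t` whose columns are the
g-vectors `g_{1;t}, …, g_{n;t}` (with respect to the base vertex `t₀`); at the base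
vertex they are the standard basis vectors, and across an edge labelled `k` the
two families are related by the piecewise-linear recurrence
`g'_k = -g_k`, `g'_i = g_i + [b_{ik}]₊ g_k - b_{ik} min(g_k, 0)` (for some exchange
data `b` with `b k = 0`), the family at the source being sign-coherent in
coordinate `k`.  Then at every vertex the g-vectors form a ℤ-basis of ℤⁿ, i.e. the
matrix `G t` is invertible over ℤ. -/
theorem gVectors_form_basis_of_sign_coherence_and_recurrence
    {n : ℕ} {V : Type*} (E : V → V → Fin n → Prop) (t₀ : V)
    (G : V → Matrix (Fin n) (Fin n) ℤ)
    (hreach : ∀ t : V, Relation.ReflTransGen (fun t₁ t₂ => ∃ k, E t₁ t₂ k) t₀ t)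
    (hbase : G t₀ = 1)
    (hedge : ∀ t₁ t₂ : V, ∀ k : Fin n, E t₁ t₂ k →
      ∃ b : Fin n → ℤ, b k = 0 ∧
        ((∀ a, 0 ≤ G t₁ k a) ∨ (∀ a, G t₁ k a ≤ 0)) ∧
        (∀ a i, G t₂ i a =
          if i = k then -G t₁ k a
          else G t₁ i a + max (b i) 0 * G t₁ k a - b i * min (G t₁ k a) 0)) :
    ∀ t : V, IsUnit (G t).det := by
  intro t
  induction hreach t with
  | refl => simp [hbase]
  | @tail t₁ t₂ _ hstep ih =>
    obtain ⟨k, hE⟩ := hstep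
    obtain ⟨b, -, hsc, hrec⟩ := hedge t₁ t₂ k hE
    rw [det_eq_neg_of_signCoherent_mutation b hsc hrec]
    exact ih.neg
end

section
/- Folding is compatible with orbit mutation on matrix entries: let (b_{ij})_{i,j ∈ Q_0} be a row- and column-finite skew-symmetric integer matrix with an action of a group Γ on Q_0 preserving the matrix (b_{h·i, h·j} = b_{ij}), with no Γ-loops at orbit [i] (meaning b_{i', i''} = 0 for all i', i'' in the orbit [i]) and sign-coherent columns over the orbit [i] (for each j, all b_{j i'} with i' ∈ [i] have the same sign, i.e. the products b_{ji'} b_{ji''} ≥ 0). Define the folded matrix by b_{[j][k]} = ∑_{j' ∈ [j]} b_{j' k}, and the orbit mutation b'_{jk} = -b_{jk} if j ∈ [i] or k ∈ [i], else b'_{jk} = b_{jk} + ∑_{i' ∈ [i]} (|b_{j i'}| b_{i' k} + b_{j i'} |b_{i' k}|)/2. Then the folding of the orbit-mutated matrix equals the mutation of the folded matrix: ∑_{j' ∈ [j]} b'_{j' k} = μ_{[i]}(B)_{[j][k]} where μ_{[i]}(B)_{[j][k]} = -b_{[j][k]} if [j] = [i] or [k] = [i], and b_{[j][k]} + (|b_{[j][i]}|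 b_{[i][k]} + b_{[j][i]} |b_{[i][k]}|)/2 otherwise. -/
open MulAction
open scoped Classical

/-- On a sign-coherent family, all values have a common sign `ε ∈ {1, -1}`. -/
lemma sign_coherent_rep {α : Type*} (f : α → ℤ) (s : Set α)
    (h : ∀ x ∈ s, ∀ y ∈ s, 0 ≤ f x * f y) :
    ∃ ε : ℤ, (ε = 1 ∨ ε = -1) ∧ ∀ x ∈ s, f x = ε * |f x| := by
  by_cases H : ∃ x ∈ s, f x ≠ 0
  · obtain ⟨x₀, hx₀, hne⟩ := H
    refine ⟨if 0 < f x₀ then 1 else -1, by split <;> simp, ?_⟩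
    intro x hx
    have hp := h x hx x₀ hx₀
    rcases lt_trichotomy (f x) 0 with hlt | heq | hgt
    · have h0 : ¬ (0 < f x₀) := by
        intro h0; nlinarith
      rw [if_neg h0, abs_of_neg hlt]; ring
    · simp [heq]
    · have h0 : 0 < f x₀ := by
        rcases hne.lt_or_gt with h' | h'
        · nlinarith
        · exact h'
      rw [if_pos h0, abs_of_pos hgt]; ring
  · push_neg at H
    exact ⟨1, Or.inl rfl, fun x hx => by simp [H x hx]⟩

/-- Folding is compatible with orbit mutation on matrix entries (Lemma 2.5 of Huang–Li).
`b` is a row- and column-finite skew-symmetric Γ-invariant integer matrix indexed by the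
vertex set `Q₀`, with no Γ-loops at the orbit `[i]` and sign-coherent columns over `[i]`.
Then the folding of the orbit-mutated matrix equals the mutation of the folded matrix. -/
theorem folding_commutes_with_orbit_mutation
    {Q₀ : Type*} (Γ : Type*) [Group Γ] [MulAction Γ Q₀]
    (b : Q₀ → Q₀ → ℤ)
    -- skew-symmetry
    (hskew : ∀ x y, b y x = -b x y)
    -- Γ-invariance
    (hinv : ∀ (h : Γ) (x y : Q₀), b (h • x) (h • y) = b x y)
    -- row and column finiteness
    (hrow : ∀ x, (Function.support (b x)).Finite)
    (hcol : ∀ x, (Function.support fun y => b y x).Finite)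
    (i : Q₀)
    -- no Γ-loops at the orbit [i]
    (hloop : ∀ i' ∈ orbit Γ i, ∀ i'' ∈ orbit Γ i, b i' i'' = 0)
    -- sign-coherence of the columns over the orbit [i]
    (hsign : ∀ (j : Q₀), ∀ i' ∈ orbit Γ i, ∀ i'' ∈ orbit Γ i, 0 ≤ b j i' * b j i'')
    -- the orbit-mutated matrix
    (b' : Q₀ → Q₀ → ℤ)
    (hb' : ∀ j k, b' j k =
      if j ∈ orbit Γ i ∨ k ∈ orbit Γ i then -b j k
      else b j k + ∑ᶠ i' ∈ orbit Γ i, (|b j i'| * b i' k + b j i' * |b i' k|) / 2)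
    (j k : Q₀) :
    ∑ᶠ j' ∈ orbit Γ j, b' j' k =
      if j ∈ orbit Γ i ∨ k ∈ orbit Γ i then -(∑ᶠ j' ∈ orbit Γ j, b j' k)
      else (∑ᶠ j' ∈ orbit Γ j, b j' k) +
        (|∑ᶠ j' ∈ orbit Γ j, b j' i| * (∑ᶠ i' ∈ orbit Γ i, b i' k) +
          (∑ᶠ j' ∈ orbit Γ j, b j' i) * |∑ᶠ i' ∈ orbit Γ i, b i' k|) / 2 := by
  by_cases hc : j ∈ orbit Γ i ∨ k ∈ orbit Γ i
  · -- mutated orbit case: everything is just negated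
    rw [if_pos hc]
    have hmem : ∀ j' ∈ orbit Γ j, b' j' k = -b j' k := by
      intro j' hj'
      rw [hb']
      rw [if_pos]
      rcases hc with h | h
      · left
        have horb : orbit Γ j = orbit Γ i := orbit_eq_iff.mpr h
        rw [← horb]; exact hj'
      · right; exact h
    rw [finsum_mem_congr rfl hmem]
    have hft : (orbit Γ j ∩ Function.support fun j' => b j' k).Finite :=
      (hcol k).inter_of_right _
    have h1 : ∑ᶠ j' ∈ orbit Γ j, b j' k = ∑ j' ∈ hft.toFinset, b j' k :=
      finsum_mem_eq_sum_of_inter_support_eq _ (by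
        ext x
        simp only [Set.mem_inter_iff, Set.Finite.coe_toFinset, Function.mem_support]
        tauto)
    have h2 : ∑ᶠ j' ∈ orbit Γ j, -b j' k = ∑ j' ∈ hft.toFinset, -b j' k :=
      finsum_mem_eq_sum_of_inter_support_eq _ (by
        ext x
        simp only [Set.mem_inter_iff, Set.Finite.coe_toFinset, Function.mem_support, neg_ne_zero]
        tauto)
    rw [h1, h2, Finset.sum_neg_distrib]
  · rw [if_neg hc]
    push_neg at hc
    obtain ⟨hj, hk⟩ := hc
    -- orbit facts
    have hjo : ∀ j' ∈ orbit Γ j, j' ∉ orbit Γ i := by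
      intro j' hj' h
      apply hj
      have e1 : orbit Γ j' = orbit Γ j := orbit_eq_iff.mpr hj'
      have e2 : orbit Γ j' = orbit Γ i := orbit_eq_iff.mpr h
      rw [← e2, e1]; exact mem_orbit_self j
    -- signs
    obtain ⟨ε, hε1, hε⟩ := sign_coherent_rep (fun i' => b i' k) (orbit Γ i)
      (fun x hx y hy => by
        have := hsign k x hx y hy
        have h1 : b x k = -b k x := hskew k x
        have h2 : b y k = -b k y := hskew k y
        show 0 ≤ b x k * b y k
        rw [h1, h2]
        nlinarith)
    obtain ⟨δ, hδ1, hδ0⟩ := sign_coherent_rep (fun i' => b j i') (orbit Γ i)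
      (fun x hx y hy => hsign j x hx y hy)
    -- extend δ-representation to the whole orbit of j
    have hδ : ∀ j' ∈ orbit Γ j, ∀ i' ∈ orbit Γ i, b j' i' = δ * |b j' i'| := by
      rintro j' ⟨h, rfl⟩ i' hi'
      have hmem : (h⁻¹ • i' : Q₀) ∈ orbit Γ i := by
        obtain ⟨g, rfl⟩ := hi'
        rw [smul_smul]
        exact mem_orbit i (h⁻¹ * g)
      have key : b (h • j) i' = b j (h⁻¹ • i') := by
        have := hinv h⁻¹ (h • j) i'
        rw [inv_smul_smul] at this
        exact this.symm
      rw [key]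
      exact hδ0 _ hmem
    obtain ⟨e, he⟩ : ∃ e : ℤ, ε + δ = 2 * e := by
      rcases hε1 with h | h <;> rcases hδ1 with h' | h' <;>
        exact ⟨(ε + δ) / 2, by omega⟩
    -- pointwise identity for the mutation correction term
    have hpt : ∀ j' ∈ orbit Γ j, ∀ i' ∈ orbit Γ i,
        (|b j' i'| * b i' k + b j' i' * |b i' k|) / 2 = e * (|b j' i'| * |b i' k|) := by
      intro j' hj' i' hi'
      have hx := hδ j' hj' i' hi'
      have hy := hε i' hi'
      have h2 : |b j' i'| * b i' k + b j' i' * |b i' k| = 2 * (e * (|b j' i'| * |b i' k|)) := by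
        linear_combination |b j' i'| * hy + |b i' k| * hx + (|b j' i'| * |b i' k|) * he
      rw [h2, Int.mul_ediv_cancel_left _ two_ne_zero]
    -- the finite set of relevant i'
    have htfin : (orbit Γ i ∩ Function.support fun i' => b i' k).Finite :=
      (hcol k).inter_of_right _
    set t : Finset Q₀ := htfin.toFinset with ht
    have htmem : ∀ x, x ∈ t ↔ x ∈ orbit Γ i ∧ b x k ≠ 0 := by
      intro x
      rw [ht, Set.Finite.mem_toFinset]
      simp [Function.mem_support]
    -- conversions of i'-sums to finite sums
    have hS : ∑ᶠ i' ∈ orbit Γ i, b i' k = ∑ i' ∈ t, b i' k :=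
      finsum_mem_eq_sum_of_inter_support_eq _ (by
        ext x
        simp only [Set.mem_inter_iff, Set.Finite.coe_toFinset, Function.mem_support, ht]
        tauto)
    -- the inner correction sum as a finite sum
    have hinner : ∀ j' ∈ orbit Γ j,
        (∑ᶠ i' ∈ orbit Γ i, (|b j' i'| * b i' k + b j' i' * |b i' k|) / 2)
          = e * ∑ i' ∈ t, |b j' i'| * |b i' k| := by
      intro j' hj'
      rw [finsum_mem_congr rfl (fun i' hi' => hpt j' hj' i' hi')]
      rw [finsum_mem_eq_sum_of_inter_support_eq
        (fun i' => e * (|b j' i'| * |b i' k|)) (s := orbit Γ i) (t := t) (by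
          ext x
          simp only [Set.mem_inter_iff, Function.mem_support, Finset.coe_sort_coe,
            Finset.mem_coe, htmem]
          constructor
          · rintro ⟨hx, hne⟩
            refine ⟨⟨hx, fun h0 => hne (by simp [h0])⟩, hne⟩
          · rintro ⟨⟨hx, _⟩, hne⟩
            exact ⟨hx, hne⟩)]
      rw [Finset.mul_sum]
    have hb'' : ∀ j' ∈ orbit Γ j, b' j' k = b j' k + e * ∑ i' ∈ t, |b j' i'| * |b i' k| := by
      intro j' hj'
      rw [hb', if_neg (by push_neg; exact ⟨hjo j' hj', hk⟩), hinner j' hj']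
    -- the finite set of relevant j'
    have hBig : ((Function.support fun j' => b j' k) ∪ (Function.support fun j' => b j' i)
        ∪ ⋃ i' ∈ t, Function.support fun j' => b j' i').Finite :=
      (((hcol k).union (hcol i)).union (t.finite_toSet.biUnion fun i' _ => hcol i'))
    have hufin : (orbit Γ j ∩ ((Function.support fun j' => b j' k)
        ∪ (Function.support fun j' => b j' i)
        ∪ ⋃ i' ∈ t, Function.support fun j' => b j' i')).Finite :=
      hBig.inter_of_right _
    set u : Finset Q₀ := hufin.toFinset with hu
    have humem : ∀ x, x ∈ u ↔ x ∈ orbit Γ j ∧ (b x k ≠ 0 ∨ b x i ≠ 0 ∨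
        ∃ i' ∈ t, b x i' ≠ 0) := by
      intro x
      rw [hu, Set.Finite.mem_toFinset]
      simp only [Set.mem_inter_iff, Set.mem_union, Set.mem_iUnion, Function.mem_support]
      tauto
    -- generic conversion of j'-sums over the orbit to sums over u
    have conv : ∀ f : Q₀ → ℤ, (∀ x ∈ orbit Γ j, f x ≠ 0 → (b x k ≠ 0 ∨ b x i ≠ 0 ∨
        ∃ i' ∈ t, b x i' ≠ 0)) → ∑ᶠ j' ∈ orbit Γ j, f j' = ∑ j' ∈ u, f j' := by
      intro f hf
      refine finsum_mem_eq_sum_of_inter_support_eq f ?_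
      ext x
      simp only [Set.mem_inter_iff, Finset.coe_sort_coe, Finset.mem_coe, humem,
        Function.mem_support]
      constructor
      · rintro ⟨hx, hne⟩
        exact ⟨⟨hx, hf x hx hne⟩, hne⟩
      · rintro ⟨⟨hx, _⟩, hne⟩
        exact ⟨hx, hne⟩
    have humemo : ∀ x ∈ u, x ∈ orbit Γ j := fun x hx => ((humem x).mp hx).1
    -- conversions
    have hF1 : ∑ᶠ j' ∈ orbit Γ j, b j' k = ∑ j' ∈ u, b j' k :=
      conv _ (fun x _ h => Or.inl h)
    have hF2 : ∑ᶠ j' ∈ orbit Γ j, b j' i = ∑ j' ∈ u, b j' i :=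
      conv _ (fun x _ h => Or.inr (Or.inl h))
    have hF5 : ∑ᶠ j' ∈ orbit Γ j, b' j' k = ∑ j' ∈ u, b' j' k := by
      refine conv _ ?_
      intro x hx hne
      rw [hb'' x hx] at hne
      by_cases h1 : b x k ≠ 0
      · exact Or.inl h1
      · push_neg at h1
        right; right
        have h2 : e * ∑ i' ∈ t, |b x i'| * |b i' k| ≠ 0 := by
          intro h0; rw [h1, h0] at hne; simp at hne
        have h3 : ∑ i' ∈ t, |b x i'| * |b i' k| ≠ 0 := by
          intro h0; rw [h0, mul_zero] at h2; exact h2 rfl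
        obtain ⟨i', hi', hne'⟩ := Finset.exists_ne_zero_of_sum_ne_zero h3
        refine ⟨i', hi', fun h0 => hne' (by simp [h0])⟩
    -- constancy of the column sums of absolute values over the orbit of i
    have hMconst : ∀ i' ∈ orbit Γ i,
        (∑ᶠ j' ∈ orbit Γ j, |b j' i'|) = ∑ᶠ j' ∈ orbit Γ j, |b j' i| := by
      rintro i' ⟨h, rfl⟩
      have step : ∀ j' : Q₀, |b j' (h • i)| = |b (h⁻¹ • j') i| := by
        intro j'
        have := hinv h⁻¹ j' (h • i)
        rw [inv_smul_smul] at this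
        rw [this]
      calc ∑ᶠ j' ∈ orbit Γ j, |b j' (h • i)|
          = ∑ᶠ j' ∈ orbit Γ j, |b (h⁻¹ • j') i| :=
            finsum_mem_congr rfl (fun x _ => step x)
        _ = ∑ᶠ x ∈ (fun y => h⁻¹ • y) '' orbit Γ j, |b x i| :=
            (finsum_mem_image (f := fun x => |b x i|) (g := fun y => (h⁻¹ : Γ) • y)
              (s := orbit Γ j) ((MulAction.injective (h⁻¹ : Γ)).injOn)).symm
        _ = ∑ᶠ j' ∈ orbit Γ j, |b j' i| := by
            rw [Set.image_smul, smul_orbit]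
    -- transfer it to u
    have hM : ∀ i' ∈ t, ∑ j' ∈ u, |b j' i'| = ∑ j' ∈ u, |b j' i| := by
      intro i' hi'
      have hio : i' ∈ orbit Γ i := ((htmem i').mp hi').1
      have c1 : ∑ᶠ j' ∈ orbit Γ j, |b j' i'| = ∑ j' ∈ u, |b j' i'| :=
        conv _ (fun x _ hne => Or.inr (Or.inr ⟨i', hi', fun h0 => hne (by simp [h0])⟩))
      have c2 : ∑ᶠ j' ∈ orbit Γ j, |b j' i| = ∑ j' ∈ u, |b j' i| :=
        conv _ (fun x _ hne => Or.inr (Or.inl (fun h0 => hne (by simp [h0]))))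
      rw [← c1, ← c2, hMconst i' hio]
    -- main computation
    set M : ℤ := ∑ j' ∈ u, |b j' i| with hMdef
    set Sa : ℤ := ∑ i' ∈ t, |b i' k| with hSadef
    have hMnn : 0 ≤ M := Finset.sum_nonneg (fun _ _ => abs_nonneg _)
    have hSann : 0 ≤ Sa := Finset.sum_nonneg (fun _ _ => abs_nonneg _)
    have hA : ∑ᶠ j' ∈ orbit Γ j, b j' i = δ * M := by
      rw [hF2, hMdef, Finset.mul_sum]
      exact Finset.sum_congr rfl (fun x hx => hδ x (humemo x hx) i (mem_orbit_self i))
    have hSe : ∑ᶠ i' ∈ orbit Γ i, b i' k = ε * Sa := by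
      rw [hS, hSadef, Finset.mul_sum]
      exact Finset.sum_congr rfl (fun x hx => hε x ((htmem x).mp hx).1)
    have habsδ : |δ| = 1 := by rcases hδ1 with h | h <;> simp [h]
    have habsε : |ε| = 1 := by rcases hε1 with h | h <;> simp [h]
    have hLHS : ∑ᶠ j' ∈ orbit Γ j, b' j' k = (∑ j' ∈ u, b j' k) + e * (M * Sa) := by
      rw [hF5]
      have : ∑ j' ∈ u, b' j' k
          = ∑ j' ∈ u, (b j' k + e * ∑ i' ∈ t, |b j' i'| * |b i' k|) :=
        Finset.sum_congr rfl (fun x hx => hb'' x (humemo x hx))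
      rw [this, Finset.sum_add_distrib]
      congr 1
      rw [← Finset.mul_sum, Finset.sum_comm]
      congr 1
      calc ∑ i' ∈ t, ∑ j' ∈ u, |b j' i'| * |b i' k|
          = ∑ i' ∈ t, (∑ j' ∈ u, |b j' i'|) * |b i' k| := by
            refine Finset.sum_congr rfl (fun i' _ => ?_)
            rw [Finset.sum_mul]
        _ = ∑ i' ∈ t, M * |b i' k| :=
            Finset.sum_congr rfl (fun i' hi' => by rw [hM i' hi'])
        _ = M * Sa := by rw [← Finset.mul_sum]
    rw [hLHS, hF1, hA, hSe]
    have habsA : |δ * M| = M := by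
      rw [abs_mul, habsδ, one_mul, abs_of_nonneg hMnn]
    have habsS : |ε * Sa| = Sa := by
      rw [abs_mul, habsε, one_mul, abs_of_nonneg hSann]
    rw [habsA, habsS]
    have hfin : M * (ε * Sa) + δ * M * Sa = 2 * (e * (M * Sa)) := by
      linear_combination (M * Sa) * he
    rw [hfin, Int.mul_ediv_cancel_left _ two_ne_zero]
end

section
/- An orbit sum of a Γ-invariant skew-symmetric matrix is sign-skew-symmetric under the no-Γ-2-cycle and sign-coherence hypotheses: let (b_{ij}) be skew-symmetric, Γ-invariant, row/column finite, with the property that for each pair of orbits [i] ≠ [j] and each fixed j, all entries b_{j i'} for i' ∈ [i] are of the same sign (all ≥ 0 or all ≤ 0). Then the folded matrix b_{[i][j]} = ∑_{i' ∈ [i]} b_{i' j} satisfies: b_{[i][j]} > 0 implies b_{[j][i]} < 0, b_{[i][j]} < 0 implies b_{[j][i]} > 0, and b_{[i][j]} = 0 implies b_{[j][i]} = 0; i.e., the folded matrix is sign-skew-symmetric. -/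
open MulAction

/-- Helper: sign behaviour of a finsum over a set of same-signed integer values. -/
lemma finsum_mem_sign_lemma {α : Type*} (f : α → ℤ) (s : Set α)
    (hf : (s ∩ Function.support f).Finite)
    (hcoh : ∀ x ∈ s, ∀ y ∈ s, 0 ≤ f x * f y) :
    ((∃ x ∈ s, 0 < f x) → 0 < ∑ᶠ x ∈ s, f x) ∧
    ((∃ x ∈ s, f x < 0) → ∑ᶠ x ∈ s, f x < 0) ∧
    (0 < ∑ᶠ x ∈ s, f x → ∃ x ∈ s, 0 < f x) ∧
    (∑ᶠ x ∈ s, f x < 0 → ∃ x ∈ s, f x < 0) := by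
  have heq : ∑ᶠ x ∈ s, f x = ∑ x ∈ hf.toFinset, f x := by
    apply finsum_mem_eq_sum_of_inter_support_eq
    rw [Set.Finite.coe_toFinset, Set.inter_assoc, Set.inter_self]
  refine ⟨?_, ?_, ?_, ?_⟩
  · rintro ⟨x, hxs, hx⟩
    rw [heq]
    apply Finset.sum_pos'
    · intro z hz
      rw [Set.Finite.mem_toFinset] at hz
      by_contra hc
      push_neg at hc
      have := hcoh z hz.1 x hxs
      nlinarith
    · exact ⟨x, Set.Finite.mem_toFinset hf |>.mpr ⟨hxs, Function.mem_support.mpr hx.ne'⟩, hx⟩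
  · rintro ⟨x, hxs, hx⟩
    rw [heq]
    apply Finset.sum_neg'
    · intro z hz
      rw [Set.Finite.mem_toFinset] at hz
      by_contra hc
      push_neg at hc
      have := hcoh z hz.1 x hxs
      nlinarith
    · exact ⟨x, Set.Finite.mem_toFinset hf |>.mpr ⟨hxs, Function.mem_support.mpr hx.ne⟩, hx⟩
  · intro hsum
    rw [heq] at hsum
    by_contra hc
    push_neg at hc
    have : ∑ x ∈ hf.toFinset, f x ≤ 0 := by
      apply Finset.sum_nonpos
      intro z hz
      rw [Set.Finite.mem_toFinset] at hz
      exact hc z hz.1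
    omega
  · intro hsum
    rw [heq] at hsum
    by_contra hc
    push_neg at hc
    have : 0 ≤ ∑ x ∈ hf.toFinset, f x := by
      apply Finset.sum_nonneg
      intro z hz
      rw [Set.Finite.mem_toFinset] at hz
      exact hc z hz.1
    omega

/-- An orbit sum of a Γ-invariant skew-symmetric matrix is sign-skew-symmetric, under
the sign-coherence (no-Γ-2-cycle) hypothesis: for distinct orbits `[i] ≠ [j]`, the
folded entries `b_{[i][j]} = ∑_{i' ∈ [i]} b_{i' j}` satisfy the sign-skew-symmetry
relations. -/
theorem folded_matrix_sign_skew_symmetric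
    {Q₀ : Type*} (Γ : Type*) [Group Γ] [MulAction Γ Q₀]
    (b : Q₀ → Q₀ → ℤ)
    -- skew-symmetry
    (hskew : ∀ x y, b y x = -b x y)
    -- Γ-invariance
    (hinv : ∀ (h : Γ) (x y : Q₀), b (h • x) (h • y) = b x y)
    -- row and column finiteness
    (hrow : ∀ x, (Function.support (b x)).Finite)
    (hcol : ∀ x, (Function.support fun y => b y x).Finite)
    (i j : Q₀)
    -- the orbits [i] and [j] are distinct
    (hij : i ∉ orbit Γ j)
    -- sign-coherence: for each fixed vertex, all entries over the orbit [i]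
    -- (respectively [j]) have the same sign
    (hsigni : ∀ (x : Q₀), ∀ i' ∈ orbit Γ i, ∀ i'' ∈ orbit Γ i, 0 ≤ b x i' * b x i'')
    (hsignj : ∀ (x : Q₀), ∀ j' ∈ orbit Γ j, ∀ j'' ∈ orbit Γ j, 0 ≤ b x j' * b x j'') :
    (0 < ∑ᶠ i' ∈ orbit Γ i, b i' j → ∑ᶠ j' ∈ orbit Γ j, b j' i < 0) ∧
    (∑ᶠ i' ∈ orbit Γ i, b i' j < 0 → 0 < ∑ᶠ j' ∈ orbit Γ j, b j' i) ∧
    (∑ᶠ i' ∈ orbit Γ i, b i' j = 0 → ∑ᶠ j' ∈ orbit Γ j, b j' i = 0) := by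
  have key1 : ∀ h : Γ, b (h⁻¹ • j) i = - b (h • i) j := by
    intro h
    have := hinv h (h⁻¹ • j) i
    rw [smul_inv_smul] at this
    rw [← this, hskew]
  have key2 : ∀ h : Γ, b (h⁻¹ • i) j = - b (h • j) i := by
    intro h
    have := hinv h (h⁻¹ • i) j
    rw [smul_inv_smul] at this
    rw [← this, hskew]
  have hcoh1 : ∀ x ∈ orbit Γ i, ∀ y ∈ orbit Γ i, 0 ≤ b x j * b y j := by
    intro x hx y hy
    have := hsigni j x hx y hy
    rw [hskew x j, hskew y j] at this
    nlinarith
  have hcoh2 : ∀ x ∈ orbit Γ j, ∀ y ∈ orbit Γ j, 0 ≤ b x i * b y i := by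
    intro x hx y hy
    have := hsignj i x hx y hy
    rw [hskew x i, hskew y i] at this
    nlinarith
  have hf1 : (orbit Γ i ∩ Function.support (fun y => b y j)).Finite :=
    (hcol j).subset Set.inter_subset_right
  have hf2 : (orbit Γ j ∩ Function.support (fun y => b y i)).Finite :=
    (hcol i).subset Set.inter_subset_right
  obtain ⟨hpos1, hneg1, hpos1', hneg1'⟩ :=
    finsum_mem_sign_lemma (fun y => b y j) (orbit Γ i) hf1 hcoh1
  obtain ⟨hpos2, hneg2, hpos2', hneg2'⟩ :=
    finsum_mem_sign_lemma (fun y => b y i) (orbit Γ j) hf2 hcoh2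
  have t12 : (∃ x ∈ orbit Γ i, 0 < b x j) → ∃ y ∈ orbit Γ j, b y i < 0 := by
    rintro ⟨x, ⟨h, rfl⟩, hx⟩
    have hx' : 0 < b (h • i) j := hx
    exact ⟨h⁻¹ • j, mem_orbit j h⁻¹, by rw [key1 h]; omega⟩
  have t12' : (∃ x ∈ orbit Γ i, b x j < 0) → ∃ y ∈ orbit Γ j, 0 < b y i := by
    rintro ⟨x, ⟨h, rfl⟩, hx⟩
    have hx' : b (h • i) j < 0 := hx
    exact ⟨h⁻¹ • j, mem_orbit j h⁻¹, by rw [key1 h]; omega⟩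
  refine ⟨?_, ?_, ?_⟩
  · intro hS1
    exact hneg2 (t12 (hpos1' hS1))
  · intro hS1
    exact hpos2 (t12' (hneg1' hS1))
  · intro hS1
    by_contra hS2
    rcases lt_trichotomy (∑ᶠ j' ∈ orbit Γ j, b j' i) 0 with h | h | h
    · -- some b y i < 0 with y = h • j, so b (h⁻¹ • i) j > 0, so S1 > 0
      obtain ⟨y, ⟨g, rfl⟩, hy⟩ := hneg2' h
      have hy' : b (g • j) i < 0 := hy
      have : 0 < ∑ᶠ i' ∈ orbit Γ i, b i' j :=
        hpos1 ⟨g⁻¹ • i, mem_orbit i g⁻¹, by rw [key2 g]; omega⟩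
      omega
    · exact hS2 h
    · obtain ⟨y, ⟨g, rfl⟩, hy⟩ := hpos2' h
      have hy' : 0 < b (g • j) i := hy
      have : ∑ᶠ i' ∈ orbit Γ i, b i' j < 0 :=
        hneg1 ⟨g⁻¹ • i, mem_orbit i g⁻¹, by show b (g⁻¹ • i) j < 0; rw [key2 g]; omega⟩
      omega
end

section
/- Determinant of the principal-coefficient pattern is preserved up to sign under the linear pieces of the g-vector recurrence: if G ∈ Mat_{n×n}(ℤ) is a matrix whose columns are sign-coherent in row k (the entries G_{k,1},…,G_{k,n} are all ≥ 0 or all ≤ 0), and G' is obtained from G by applying to every column the recurrence g'_k = -g_k, g'_i = g_i + [b_i]_+ g_k - b_i min(g_k, 0) (i ≠ k) for a fixed integer vector (b_i) with b_k = 0, then det(G') = -det(G). In particular |det(G')| = |det(G)|, so G' is invertible over ℤ iff G is. -/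
/-- Auxiliary: if `G'` is obtained from `G` by negating row `k` and adding `c i` times
row `k` to each other row, then `det G' = -det G`. -/
lemma gRecurrence_det_aux {n : ℕ} (k : Fin n) (c : Fin n → ℤ)
    (G G' : Matrix (Fin n) (Fin n) ℤ)
    (h : ∀ i a, G' i a = if i = k then -G k a else G i a + c i * G k a) :
    G'.det = -G.det := by
  set v : Fin n → ℤ := fun i => if i = k then -1 else c i with hv
  set E : Matrix (Fin n) (Fin n) ℤ := (1 : Matrix (Fin n) (Fin n) ℤ).updateCol k v with hE
  have hmul : G' = E * G := by
    ext i a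
    rw [h, Matrix.mul_apply]
    by_cases hik : i = k
    · subst hik
      rw [Finset.sum_eq_single i]
      · simp [hE, hv, Matrix.updateCol_apply]
      · intro j _ hj
        simp [hE, hv, Matrix.updateCol_apply, Matrix.one_apply, hj, Ne.symm hj]
      · simp
    · rw [Finset.sum_eq_add_of_mem i k (Finset.mem_univ i) (Finset.mem_univ k) hik]
      · simp [hE, hv, Matrix.updateCol_apply, Matrix.one_apply, hik]
      · intro j _ hj
        simp only [hE, hv, Matrix.updateCol_apply, Matrix.one_apply]
        rcases hj with ⟨hji, hjk⟩
        simp [hjk, Ne.symm hji]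
  have hdetE : E.det = -1 := by
    have hsplit : v = (fun i => if i = k then 0 else c i)
        + (-1 : ℤ) • (fun i => (1 : Matrix (Fin n) (Fin n) ℤ) i k) := by
      funext i
      by_cases hik : i = k <;> simp [hv, hik, Matrix.one_apply]
    rw [hE, hsplit, Matrix.det_updateCol_add, Matrix.det_updateCol_smul,
      Matrix.updateCol_eq_self, Matrix.det_one]
    have hzero : ((1 : Matrix (Fin n) (Fin n) ℤ).updateCol k
        (fun i => if i = k then 0 else c i)).det = 0 := by
      apply Matrix.det_eq_zero_of_row_eq_zero k
      intro j
      by_cases hjk : j = k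
      · simp [Matrix.updateCol_apply, hjk]
      · simp [Matrix.updateCol_apply, Matrix.one_apply, hjk]
        exact fun h => hjk h.symm
    rw [hzero]
    ring
  rw [hmul, Matrix.det_mul, hdetE]
  ring

/-- If the columns of `G` are sign-coherent in row `k` and `G'` is obtained by applying
the g-vector recurrence (with data `b`, `b k = 0`) to every column of `G`, then
`det G' = -det G`; in particular `G'` is invertible over ℤ iff `G` is. -/
theorem gRecurrence_det {n : ℕ} (k : Fin n) (b : Fin n → ℤ) (hb : b k = 0)
    (G G' : Matrix (Fin n) (Fin n) ℤ)
    (hsign : (∀ a, 0 ≤ G k a) ∨ (∀ a, G k a ≤ 0))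
    (hG' : ∀ i a, G' i a =
      if i = k then -G k a
      else G i a + max (b i) 0 * G k a - b i * min (G k a) 0) :
    G'.det = -G.det ∧ (IsUnit G'.det ↔ IsUnit G.det) := by
  have hdet : G'.det = -G.det := by
    rcases hsign with hpos | hneg
    · apply gRecurrence_det_aux k (fun i => max (b i) 0) G G'
      intro i a
      rw [hG' i a, min_eq_right (hpos a)]
      by_cases hik : i = k <;> simp [hik]
    · apply gRecurrence_det_aux k (fun i => max (b i) 0 - b i) G G'
      intro i a
      rw [hG' i a, min_eq_left (hneg a)]
      by_cases hik : i = k <;> simp [hik]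
      ring
  refine ⟨hdet, ?_⟩
  rw [hdet, IsUnit.neg_iff]
end

section
/- Sign-coherence of index vectors for a rigid pair: let C be a Hom-finite 2-Calabi–Yau triangulated category with cluster-tilting subcategory T, and let X, Y be objects with Ext¹(X ⊕ Y, X ⊕ Y) = 0. Let T₁^X → T₀^X → X → T₁^X[1] and T₁^Y → T₀^Y → Y → T₁^Y[1] be triangles with minimal right T-approximations, with X, Y having no direct summands in T[1]. Then for every indecomposable T ∈ T: T is not simultaneously a direct summand of T₀^X and of T₁^Y. Consequently, for each indecomposable T, the coefficients [ind_T(X) : T] and [ind_T(Y) : T] of the indices ind_T(X) = [T₀^X] − [T₁^X] and ind_T(Y) = [T₀^Y] − [T₁^Y] cannot have strictly opposite signs. -/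
/-! Since `Ext¹(Y, X) = 0`, every morphism `T₁ʸ ⟶ T₀ˣ` splits as `aʸ ≫ h + n ≫ aˣ`: lift through
the triangle of `Y`, approximate by `fˣ`, and correct the error through the triangle of `X`.
Applied to the composite `T₁ʸ ⟶ T ⟶ T₀ˣ` of a common summand `T`, this writes `𝟙 T` as a sum
of an endomorphism factoring through `aʸ` and one factoring through `aˣ`. The endomorphism
ring of an indecomposable object of a Hom-finite category is local (Fitting's lemma), so one
of the two is invertible; then `T` is a summand of `T₀ʸ` (resp. `T₀ˣ`) killed by the right
minimal map `fʸ` (resp. `fˣ`), which forces `T = 0`. -/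

open CategoryTheory CategoryTheory.Limits CategoryTheory.Pretriangulated

/-- `P` is a direct summand of `Q`. -/
def IsDirectSummandOf {C : Type*} [Category C] (P Q : C) : Prop :=
  ∃ (i : P ⟶ Q) (r : Q ⟶ P), i ≫ r = 𝟙 P

/-- An object is indecomposable if it is nonzero and has no nontrivial idempotent
endomorphisms. -/
def IsIndecomposable {C : Type*} [Category C] [Preadditive C] (Z : C) : Prop :=
  ¬ CategoryTheory.Limits.IsZero Z ∧ ∀ e : Z ⟶ Z, e ≫ e = e → e = 0 ∨ e = 𝟙 Z

theorem isNilpotent_or_isUnit_of_isIdempotentElem {A : Type*} [Ring A] [IsArtinianRing A]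
    (hA : ∀ e : A, IsIdempotentElem e → e = 0 ∨ e = 1) (a : A) :
    IsNilpotent a ∨ IsUnit a := by
  obtain ⟨n, hcompl, hn⟩ := ((LinearMap.mulRight A a).eventually_isCompl_ker_pow_range_pow.and
    (Filter.eventually_gt_atTop 0)).exists
  -- Fitting: the kernel component of `1` in `A = ker ⊕ range` of `· * aⁿ` is idempotent.
  rw [LinearMap.pow_mulRight] at hcompl
  obtain ⟨u, hu, v, hv, huv⟩ := Submodule.mem_sup.mp (hcompl.codisjoint.eq_top ▸
    Submodule.mem_top (x := (1 : A)))
  have hu_idem : IsIdempotentElem u := by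
    have hmem : u * u - u ∈ LinearMap.ker (LinearMap.mulRight A (a ^ n)) :=
      sub_mem (Submodule.smul_mem _ u hu) hu
    have hmem' : u * u - u ∈ LinearMap.range (LinearMap.mulRight A (a ^ n)) := by
      have : u * u - u = -(u * v) := by
        rw [eq_neg_iff_add_eq_zero, sub_add_eq_add_sub, ← mul_add, huv, mul_one, sub_self]
      exact this ▸ neg_mem (Submodule.smul_mem _ u hv)
    exact sub_eq_zero.mp (Submodule.disjoint_def.mp hcompl.disjoint _ hmem hmem')
  rcases hA u hu_idem with rfl | rfl
  · right
    obtain ⟨w, hw⟩ := hv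
    rw [zero_add] at huv
    refine IsUnit.of_mul_eq_one_right (w * a ^ (n - 1)) ?_
    rw [mul_assoc, ← pow_succ, Nat.sub_add_cancel hn]
    exact hw.trans huv
  · left
    exact ⟨n, by simpa using hu⟩

theorem IsLocalRing.of_forall_isIdempotentElem {A : Type*} [Ring A] [Nontrivial A]
    [IsArtinianRing A] (hA : ∀ e : A, IsIdempotentElem e → e = 0 ∨ e = 1) : IsLocalRing A :=
  of_isUnit_or_isUnit_one_sub_self fun a =>
    (isNilpotent_or_isUnit_of_isIdempotentElem hA a).symm.imp_right IsNilpotent.isUnit_one_sub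

section Preadditive

variable {C : Type*} [Category C] [Preadditive C]

def IsRightMinimal {M N : C} (f : M ⟶ N) : Prop :=
  ∀ φ : M ⟶ M, φ ≫ f = f → IsIso φ

theorem IsRightMinimal.isZero_of_comp_eq_zero {T M N : C} {f : M ⟶ N} (hf : IsRightMinimal f)
    (g : T ⟶ M) (s : M ⟶ T) [IsIso (g ≫ s)] (hg : g ≫ f = 0) : IsZero T := by
  set r := s ≫ inv (g ≫ s)
  have hgr : g ≫ r = 𝟙 T := (Category.assoc _ _ _).symm.trans (IsIso.hom_inv_id _)
  have hφ : IsIso (𝟙 M - r ≫ g) := hf _ <| by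
    rw [Preadditive.sub_comp, Category.assoc, hg, comp_zero, sub_zero, Category.id_comp]
  have hg0 : g = 0 := by
    rw [← cancel_mono (𝟙 M - r ≫ g), Preadditive.comp_sub, ← Category.assoc, hgr]
    simp
  rw [IsZero.iff_id_eq_zero, ← hgr, hg0, zero_comp]

theorem IsIndecomposable.isLocalRing_end (k : Type*) [Field k] [Linear k C] {T : C}
    [FiniteDimensional k (T ⟶ T)] (hT : IsIndecomposable T) : IsLocalRing (End T) :=
  have : Nontrivial (End T) := ⟨⟨𝟙 T, 0, fun h => hT.1 ((IsZero.iff_id_eq_zero T).mpr h)⟩⟩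
  have : FiniteDimensional k (End T) := ‹FiniteDimensional k (T ⟶ T)›
  have : IsArtinianRing (End T) := .of_finite k (End T)
  IsLocalRing.of_forall_isIdempotentElem hT.2

theorem eq_zero_of_retract {A B A' B' : C} (hA : Retract A' A) (hB : Retract B' B)
    (h : ∀ f : A ⟶ B, f = 0) (f : A' ⟶ B') : f = 0 := by
  simpa using hA.i ≫= h (hA.r ≫ f ≫ hB.i) =≫ hB.r

theorem eq_zero_of_forall_eq_zero_shift_one [HasShift C ℤ] [(shiftFunctor C (1 : ℤ)).Additive]
    {A B : C} (h : ∀ g : A ⟶ B⟦(1 : ℤ)⟧, g = 0) (f : A⟦(-1 : ℤ)⟧ ⟶ B) : f = 0 :=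
  (shiftFunctor C (1 : ℤ)).map_injective <| by
    rw [Functor.map_zero,
      ← cancel_epi ((shiftFunctorCompIsoId C (-1 : ℤ) 1 (by norm_num)).inv.app A), comp_zero]
    exact h _

end Preadditive

section Pretriangulated

variable {C : Type*} [Category C] [Preadditive C] [HasZeroObject C] [HasShift C ℤ]
  [∀ n : ℤ, (shiftFunctor C n).Additive] [Pretriangulated C]
  {X Y T₁X T₀X T₁Y T₀Y : C}
  {aX : T₁X ⟶ T₀X} {fX : T₀X ⟶ X} {cX : X ⟶ T₁X⟦(1 : ℤ)⟧}
  {aY : T₁Y ⟶ T₀Y} {fY : T₀Y ⟶ Y} {cY : Y ⟶ T₁Y⟦(1 : ℤ)⟧}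

theorem exists_eq_mor₁_comp_add_comp_mor₁ (hYX : ∀ f : Y ⟶ X⟦(1 : ℤ)⟧, f = 0)
    (hXtri : Triangle.mk aX fX cX ∈ distTriang C) (hYtri : Triangle.mk aY fY cY ∈ distTriang C)
    (happrox : ∀ g : T₀Y ⟶ X, ∃ h : T₀Y ⟶ T₀X, h ≫ fX = g) (φ : T₁Y ⟶ T₀X) :
    ∃ (h : T₀Y ⟶ T₀X) (n : T₁Y ⟶ T₁X), φ = aY ≫ h + n ≫ aX := by
  obtain ⟨g, hg⟩ := Triangle.yoneda_exact₂ _ (inv_rot_of_distTriang _ hYtri) (φ ≫ fX)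
    (eq_zero_of_forall_eq_zero_shift_one hYX _)
  obtain ⟨h, rfl⟩ := happrox g
  have hφ : (φ - aY ≫ h) ≫ fX = 0 := by
    rw [Preadditive.sub_comp, Category.assoc]
    exact sub_eq_zero.mpr hg
  obtain ⟨n, hn⟩ := Triangle.coyoneda_exact₂ _ hXtri _ hφ
  exact ⟨h, n, eq_add_of_sub_eq' hn⟩

theorem not_isDirectSummandOf_and_of_extOne_eq_zero (k : Type*) [Field k] [Linear k C]
    [∀ A B : C, FiniteDimensional k (A ⟶ B)] (hYX : ∀ f : Y ⟶ X⟦(1 : ℤ)⟧, f = 0)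
    (hXtri : Triangle.mk aX fX cX ∈ distTriang C) (hYtri : Triangle.mk aY fY cY ∈ distTriang C)
    (happrox : ∀ g : T₀Y ⟶ X, ∃ h : T₀Y ⟶ T₀X, h ≫ fX = g)
    (hminX : IsRightMinimal fX) (hminY : IsRightMinimal fY) {T : C} (hT : IsIndecomposable T) :
    ¬ (IsDirectSummandOf T T₀X ∧ IsDirectSummandOf T T₁Y) := by
  rintro ⟨⟨i, p, hip⟩, ⟨j, q, hjq⟩⟩
  obtain ⟨h, n, hqi⟩ := exists_eq_mor₁_comp_add_comp_mor₁ hYX hXtri hYtri happrox (q ≫ i)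
  have hsum : (j ≫ aY) ≫ h ≫ p + (j ≫ n ≫ aX) ≫ p = 𝟙 T :=
    calc (j ≫ aY) ≫ h ≫ p + (j ≫ n ≫ aX) ≫ p = j ≫ (aY ≫ h + n ≫ aX) ≫ p := by
          simp only [Preadditive.comp_add, Preadditive.add_comp, Category.assoc]
      _ = 𝟙 T := by rw [← hqi, Category.assoc, hip, Category.comp_id, hjq]
  have := hT.isLocalRing_end k
  refine hT.1 ?_
  rcases IsLocalRing.isUnit_or_isUnit_of_add_one (R := End T) hsum with hu | hu
  · have := (isUnit_iff_isIso _).mp hu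
    exact hminY.isZero_of_comp_eq_zero (j ≫ aY) (h ≫ p) <| by
      rw [Category.assoc, show aY ≫ fY = 0 from comp_distTriang_mor_zero₁₂ _ hYtri, comp_zero]
  · have := (isUnit_iff_isIso _).mp hu
    exact hminX.isZero_of_comp_eq_zero (j ≫ n ≫ aX) p <| by
      rw [Category.assoc, Category.assoc, show aX ≫ fX = 0 from comp_distTriang_mor_zero₁₂ _ hXtri,
        comp_zero, comp_zero]

end Pretriangulated

/-- Sign-coherence of index vectors for a rigid pair (Dehy–Keller): in a Hom-finite
2-Calabi–Yau triangulated category `C` with cluster-tilting subcategory `𝒯`, if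
`X ⊕ Y` is rigid, `T₁ᵡ → T₀ᵡ → X → T₁ᵡ[1]` and `T₁ʸ → T₀ʸ → Y → T₁ʸ[1]` are
triangles whose middle maps are minimal right `𝒯`-approximations, and `X, Y` have no
direct summands in `𝒯[1]`, then no indecomposable `T ∈ 𝒯` is simultaneously a direct
summand of `T₀ᵡ` and of `T₁ʸ`, nor of `T₀ʸ` and of `T₁ᵡ`; hence the coefficients
`[ind(X) : T]` and `[ind(Y) : T]` never have strictly opposite signs. -/
theorem index_sign_coherence_of_rigid_pair
    (k : Type*) [Field k] {C : Type*} [Category C] [Preadditive C] [HasZeroObject C]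
    [HasShift C ℤ] [∀ n : ℤ, (shiftFunctor C n).Additive] [Pretriangulated C]
    [HasBinaryBiproducts C] [CategoryTheory.Linear k C]
    [∀ A B : C, FiniteDimensional k (A ⟶ B)]
    -- 2-Calabi–Yau property
    (hCY : ∀ A B : C, (A ⟶ B⟦(2 : ℤ)⟧) ≃ₗ[k] Module.Dual k (B ⟶ A))
    -- `𝒯` is a cluster-tilting subcategory
    (𝒯 : Set C)
    (hT1 : ∀ Z : C, (∀ T' ∈ 𝒯, ∀ f : Z ⟶ T'⟦(1 : ℤ)⟧, f = 0) ↔ Z ∈ 𝒯)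
    (hT2 : ∀ Z : C, (∀ T' ∈ 𝒯, ∀ f : T' ⟶ Z⟦(1 : ℤ)⟧, f = 0) ↔ Z ∈ 𝒯)
    -- the rigid pair
    (X Y : C) (hrigid : ∀ f : (X ⊞ Y) ⟶ (X ⊞ Y)⟦(1 : ℤ)⟧, f = 0)
    -- minimal `𝒯`-presentation triangles of `X` and `Y`
    (T₁X T₀X T₁Y T₀Y : C) (hmem : T₁X ∈ 𝒯 ∧ T₀X ∈ 𝒯 ∧ T₁Y ∈ 𝒯 ∧ T₀Y ∈ 𝒯)
    (aX : T₁X ⟶ T₀X) (fX : T₀X ⟶ X) (cX : X ⟶ T₁X⟦(1 : ℤ)⟧)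
    (hXtri : Triangle.mk aX fX cX ∈ distTriang C)
    (aY : T₁Y ⟶ T₀Y) (fY : T₀Y ⟶ Y) (cY : Y ⟶ T₁Y⟦(1 : ℤ)⟧)
    (hYtri : Triangle.mk aY fY cY ∈ distTriang C)
    (happroxX : ∀ T' ∈ 𝒯, ∀ g : T' ⟶ X, ∃ h : T' ⟶ T₀X, h ≫ fX = g)
    (hminX : ∀ φ : T₀X ⟶ T₀X, φ ≫ fX = fX → IsIso φ)
    (happroxY : ∀ T' ∈ 𝒯, ∀ g : T' ⟶ Y, ∃ h : T' ⟶ T₀Y, h ≫ fY = g)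
    (hminY : ∀ φ : T₀Y ⟶ T₀Y, φ ≫ fY = fY → IsIso φ)
    -- `X` and `Y` have no direct summands in `𝒯[1]`
    (hXsum : ∀ T' ∈ 𝒯, ¬ IsZero T' → ¬ IsDirectSummandOf (T'⟦(1 : ℤ)⟧) X)
    (hYsum : ∀ T' ∈ 𝒯, ¬ IsZero T' → ¬ IsDirectSummandOf (T'⟦(1 : ℤ)⟧) Y) :
    ∀ T' ∈ 𝒯, IsIndecomposable T' →
      ¬ (IsDirectSummandOf T' T₀X ∧ IsDirectSummandOf T' T₁Y) ∧
      ¬ (IsDirectSummandOf T' T₀Y ∧ IsDirectSummandOf T' T₁X) := by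
  rintro T' - hT'
  have hYX : ∀ f : Y ⟶ X⟦(1 : ℤ)⟧, f = 0 := eq_zero_of_retract
    (BinaryBiproduct.bicone X Y).retract_right
    ((BinaryBiproduct.bicone X Y).retract_left.map (shiftFunctor C 1)) hrigid
  have hXY : ∀ f : X ⟶ Y⟦(1 : ℤ)⟧, f = 0 := eq_zero_of_retract
    (BinaryBiproduct.bicone X Y).retract_left
    ((BinaryBiproduct.bicone X Y).retract_right.map (shiftFunctor C 1)) hrigid
  exact ⟨not_isDirectSummandOf_and_of_extOne_eq_zero k hYX hXtri hYtri
      (happroxX T₀Y hmem.2.2.2) hminX hminY hT',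
    not_isDirectSummandOf_and_of_extOne_eq_zero k hXY hYtri hXtri
      (happroxY T₀X hmem.2.1) hminY hminX hT'⟩
end
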